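/- Let f be holomorphic on 𝔻 and continuous on the closed disk. Then for every z ∈ 𝔻, (1 - |z|)|f'(z)| ≤ ((1/2π)∫₀^{2π} |f(e^{iτ}) - f(z)|² P(z, e^{iτ}) dτ)^{1/2} = (P[|f|²](z) - |f(z)|²)^{1/2}, where P(z, e^{iτ}) is the Poisson kernel. -/

import Mathlib

/-!
Apply the Poisson integral formula to the difference quotient `dslope f z`: it gives
`f'(z) = ∫ P(z, ζ) (f ζ - f z) / (ζ - z)`, and `|ζ - z| ≥ 1 - |z|` on the unit circle, so
`(1 - |z|) |f'(z)| ≤ ∫ P(z, ζ) |f ζ - f z|`. Since `P(z, ·) dτ / 2π` is a probability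
measure with barycentre `∫ P(z, ζ) f ζ = f z`, the variance identity
`∫ P |g - a|² = ∫ P |g|² - |a|²` for `a = ∫ P g` gives both the equality and, applied to
`|f - f z|`, the Cauchy–Schwarz step.
-/

open Complex Metric Real Topology

section CircleAverage

variable {c : ℂ} {R : ℝ}

theorem norm_circleAverage_le_circleAverage_norm {E : Type*} [NormedAddCommGroup E]
    [NormedSpace ℝ E] {f : ℂ → E} :
    ‖circleAverage f c R‖ ≤ circleAverage (fun ζ ↦ ‖f ζ‖) c R := by
  rw [circleAverage_def, circleAverage_def, norm_smul, smul_eq_mul,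
    Real.norm_of_nonneg (by positivity)]
  gcongr
  exact intervalIntegral.norm_integral_le_integral_norm two_pi_pos.le

theorem circleAverage_norm_sub_sq_mul {E : Type*} [NormedAddCommGroup E]
    [InnerProductSpace ℝ E] [CompleteSpace E] {P : ℂ → ℝ} {g : ℂ → E} {a : E}
    (hP : CircleIntegrable P c R) (hPg : CircleIntegrable (P • g) c R)
    (hPg2 : CircleIntegrable (fun ζ ↦ ‖g ζ‖ ^ 2 * P ζ) c R)
    (hP1 : circleAverage P c R = 1) (ha : circleAverage (P • g) c R = a) :
    circleAverage (fun ζ ↦ ‖g ζ - a‖ ^ 2 * P ζ) c R =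
      circleAverage (fun ζ ↦ ‖g ζ‖ ^ 2 * P ζ) c R - ‖a‖ ^ 2 := by
  have hcross : CircleIntegrable (fun ζ ↦ (2 : ℝ) • inner ℝ a (P ζ • g ζ)) c R :=
    CircleIntegrable.const_smul ⟨hPg.1.const_inner a, hPg.2.const_inner a⟩
  have hcross_avg : circleAverage (fun ζ ↦ inner ℝ a (P ζ • g ζ)) c R = ‖a‖ ^ 2 := by
    simpa [ha, real_inner_self_eq_norm_sq, Function.comp_def] using
      (innerSL ℝ a).circleAverage_comp_comm hPg
  have hexpand : (fun ζ ↦ ‖g ζ - a‖ ^ 2 * P ζ) =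
      fun ζ ↦ ‖g ζ‖ ^ 2 * P ζ - (2 : ℝ) • inner ℝ a (P ζ • g ζ) + ‖a‖ ^ 2 • P ζ := by
    ext ζ
    simp only [norm_sub_sq_real, inner_smul_right, real_inner_comm, smul_eq_mul]
    ring
  rw [hexpand,
    circleAverage_fun_add (f₁ := fun ζ ↦ ‖g ζ‖ ^ 2 * P ζ - (2 : ℝ) • inner ℝ a (P ζ • g ζ))
      (f₂ := fun ζ ↦ ‖a‖ ^ 2 • P ζ) (hPg2.sub hcross) hP.const_smul,
    circleAverage_fun_sub hPg2 hcross, circleAverage_fun_smul, circleAverage_fun_smul,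
    hcross_avg, hP1, smul_eq_mul, smul_eq_mul]
  ring

theorem sq_circleAverage_mul_le {P u : ℂ → ℝ} (hP0 : ∀ ζ ∈ sphere c |R|, 0 ≤ P ζ)
    (hP : CircleIntegrable P c R) (hPu : CircleIntegrable (fun ζ ↦ u ζ * P ζ) c R)
    (hPu2 : CircleIntegrable (fun ζ ↦ u ζ ^ 2 * P ζ) c R) (hP1 : circleAverage P c R = 1) :
    circleAverage (fun ζ ↦ u ζ * P ζ) c R ^ 2 ≤ circleAverage (fun ζ ↦ u ζ ^ 2 * P ζ) c R := by
  set m := circleAverage (fun ζ ↦ u ζ * P ζ) c R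
  have hsmul : P • u = fun ζ ↦ u ζ * P ζ := funext fun ζ ↦ mul_comm _ _
  have hvar := circleAverage_norm_sub_sq_mul (g := u) hP (hsmul ▸ hPu) (by simpa using hPu2)
    hP1 (congrArg (circleAverage · c R) hsmul)
  have hvar_nonneg : 0 ≤ circleAverage (fun ζ ↦ ‖u ζ - m‖ ^ 2 * P ζ) c R :=
    circleAverage_nonneg_of_nonneg fun ζ hζ ↦ mul_nonneg (sq_nonneg _) (hP0 ζ hζ)
  simp only [Real.norm_eq_abs, sq_abs] at hvar hvar_nonneg
  linarith

end CircleAverage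

section PoissonKernel

variable {c w : ℂ} {R : ℝ}

theorem poissonKernel_nonneg {ζ : ℂ} (hw : w ∈ ball c R) (hζ : ζ ∈ sphere c |R|) :
    0 ≤ poissonKernel c w ζ := by
  have hle : ‖w - c‖ ≤ ‖ζ - c‖ := by
    rw [mem_sphere_iff_norm.1 hζ]
    exact (mem_ball_iff_norm.1 hw).le.trans (le_abs_self R)
  exact div_nonneg (sub_nonneg.2 (pow_le_pow_left₀ (norm_nonneg _) hle 2)) (sq_nonneg _)

theorem continuousOn_poissonKernel_sphere (hw : w ∈ ball c R) :
    ContinuousOn (poissonKernel c w) (sphere c |R|) := by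
  rw [poissonKernel_eq_re_herglotzRieszKernel]
  exact continuous_re.comp_continuousOn (continuousOn_herglotzRieszKernel_sphere hw)

theorem circleAverage_poissonKernel (hw : w ∈ ball c R) :
    circleAverage (poissonKernel c w) c R = 1 := by
  simpa [Pi.mul_def] using
    (InnerProductSpace.harmonicContOnCl_const (c := (1 : ℝ))).circleAverage_poissonKernel_smul hw

theorem poissonKernel_zero_exp (z : ℂ) (τ : ℝ) :
    poissonKernel 0 z (exp (τ * I)) = (1 - ‖z‖ ^ 2) / ‖exp (τ * I) - z‖ ^ 2 := by
  simp [poissonKernel, norm_exp_ofReal_mul_I]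

theorem DiffContOnCl.norm_deriv_mul_le_circleAverage {E : Type*} [NormedAddCommGroup E]
    [NormedSpace ℂ E] [CompleteSpace E] {f : ℂ → E} (hf : DiffContOnCl ℂ f (ball c R))
    (hw : w ∈ ball c R) :
    (R - ‖w - c‖) * ‖deriv f w‖ ≤
      Real.circleAverage (fun ζ ↦ ‖f ζ - f w‖ * poissonKernel c w ζ) c R := by
  set δ := R - ‖w - c‖
  have hR : 0 < R := pos_of_mem_ball hw
  have hδ : 0 < δ := sub_pos.2 (mem_ball_iff_norm.1 hw)
  have hw_nhds : ball c R ∈ 𝓝 w := isOpen_ball.mem_nhds hw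
  have hslope : DiffContOnCl ℂ (dslope f w) (ball c R) :=
    ⟨(differentiableOn_dslope hw_nhds).2 hf.differentiableOn,
      (continuousOn_dslope (Filter.mem_of_superset hw_nhds subset_closure)).2
        ⟨hf.continuousOn, hf.differentiableOn.differentiableAt hw_nhds⟩⟩
  have hsphere : sphere c |R| ⊆ closure (ball c R) := by
    rw [abs_of_pos hR, closure_ball c hR.ne']
    exact sphere_subset_closedBall
  have hP := continuousOn_poissonKernel_sphere hw
  have hbound : ∀ ζ ∈ sphere c |R|, ‖(poissonKernel c w • dslope f w) ζ‖ ≤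
      δ⁻¹ • (‖f ζ - f w‖ * poissonKernel c w ζ) := by
    intro ζ hζ
    have hPζ := poissonKernel_nonneg hw hζ
    rw [mem_sphere_iff_norm, abs_of_pos hR] at hζ
    have hdist : δ ≤ ‖ζ - w‖ := by
      have h := norm_sub_norm_le (ζ - c) (w - c)
      rwa [hζ, sub_sub_sub_cancel_right] at h
    have hζw : ζ ≠ w := by
      rintro rfl
      rw [sub_self, norm_zero] at hdist
      linarith
    rw [Pi.smul_apply', dslope_of_ne _ hζw, slope_def_module, norm_smul, norm_smul, norm_inv,
      Real.norm_of_nonneg hPζ, smul_eq_mul, mul_left_comm, mul_comm _ (poissonKernel c w ζ)]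
    exact mul_le_mul_of_nonneg_right (inv_anti₀ hδ hdist) (by positivity)
  calc δ * ‖deriv f w‖
      = δ * ‖Real.circleAverage (poissonKernel c w • dslope f w) c R‖ := by
        rw [hslope.circleAverage_poissonKernel_smul hw, dslope_same]
    _ ≤ δ * Real.circleAverage (fun ζ ↦ ‖(poissonKernel c w • dslope f w) ζ‖) c R := by
        gcongr
        exact norm_circleAverage_le_circleAverage_norm
    _ ≤ δ * Real.circleAverage
          (fun ζ ↦ δ⁻¹ • (‖f ζ - f w‖ * poissonKernel c w ζ)) c R := by
        gcongr with ζ hζ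
        · exact (hP.smul (hslope.continuousOn.mono hsphere)).norm.circleIntegrable'
        · exact ((((hf.continuousOn.mono hsphere).sub continuousOn_const).norm.mul hP).const_smul
            δ⁻¹).circleIntegrable'
        · exact hbound ζ hζ
    _ = Real.circleAverage (fun ζ ↦ ‖f ζ - f w‖ * poissonKernel c w ζ) c R := by
        rw [circleAverage_fun_smul, smul_eq_mul, mul_inv_cancel_left₀ hδ.ne']

end PoissonKernel

theorem circleAverage_zero_one (G : ℂ → ℝ) :
    circleAverage G 0 1 = 1 / (2 * π) * ∫ τ in 0..2 * π, G (exp (τ * I)) := by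
  simp [circleAverage_def, circleMap_zero]

theorem stmt16 (f : ℂ → ℂ)
    (hf : DifferentiableOn ℂ f (ball (0:ℂ) 1))
    (hc : ContinuousOn f (closedBall (0:ℂ) 1))
    (z : ℂ) (hz : z ∈ ball (0:ℂ) 1) :
    (1 - ‖z‖) * ‖deriv f z‖ ≤
      Real.sqrt ((1 / (2 * π)) *
        ∫ τ in (0:ℝ)..(2 * π),
          ‖f (Complex.exp (τ * Complex.I)) - f z‖ ^ 2 *
            ((1 - ‖z‖ ^ 2) / ‖Complex.exp (τ * Complex.I) - z‖ ^ 2)) ∧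
    (1 / (2 * π)) *
        ∫ τ in (0:ℝ)..(2 * π),
          ‖f (Complex.exp (τ * Complex.I)) - f z‖ ^ 2 *
            ((1 - ‖z‖ ^ 2) / ‖Complex.exp (τ * Complex.I) - z‖ ^ 2)
      = ((1 / (2 * π)) *
          ∫ τ in (0:ℝ)..(2 * π),
            ‖f (Complex.exp (τ * Complex.I))‖ ^ 2 *
              ((1 - ‖z‖ ^ 2) / ‖Complex.exp (τ * Complex.I) - z‖ ^ 2)) - ‖f z‖ ^ 2 := by
  have hfc : DiffContOnCl ℂ f (ball 0 1) := ⟨hf, by rwa [closure_ball 0 one_ne_zero]⟩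
  have hfs : ContinuousOn f (sphere 0 |1|) := hc.mono (by simpa using sphere_subset_closedBall)
  have hP := continuousOn_poissonKernel_sphere hz
  have hdiff : ContinuousOn (fun ζ ↦ ‖f ζ - f z‖) (sphere 0 |1|) :=
    (hfs.sub continuousOn_const).norm
  have hvar := circleAverage_norm_sub_sq_mul hP.circleIntegrable' (hP.smul hfs).circleIntegrable'
    ((hfs.norm.pow 2).mul hP).circleIntegrable' (circleAverage_poissonKernel hz)
    (hfc.circleAverage_poissonKernel_smul hz)
  have hjensen := sq_circleAverage_mul_le (fun _ ↦ poissonKernel_nonneg hz)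
    hP.circleIntegrable' (hdiff.mul hP).circleIntegrable' ((hdiff.pow 2).mul hP).circleIntegrable'
    (circleAverage_poissonKernel hz)
  have hderiv := hfc.norm_deriv_mul_le_circleAverage hz
  simp only [circleAverage_zero_one, poissonKernel_zero_exp, sub_zero] at hvar hjensen hderiv
  exact ⟨hderiv.trans ((le_abs_self _).trans (Real.abs_le_sqrt hjensen)), hvar⟩
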